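/- Assume the direct-system setup with the interleaving hypothesis (H) and properties (S) and (K), and fix one index k for which the interleaving homomorphisms a_n : F_n → G^k_{n+1} and b_n : G^k_n → F_{n+1} exist for all n ≤ 10 (with the commutation and composition identities of (H)). Then: (a) whenever x, x' ∈ F_2 satisfy i_2(x) = i_2(x'), one has j^k_3(a_2(x)) = j^k_3(a_2(x')) in G^k_∞; and (b) the resulting maps ψ_n : F_n → G^k_∞, defined by ψ_n(ξ) = j^k_3(a_2(η)) for any η ∈ F_2 with i_2(η) = i_n(ξ), are well-defined homomorphisms and are compatible, i.e. ψ_m ∘ i_{n,m} = ψ_n for all n ≤ m. -/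

import Mathlib

/-!
Interleaving `F`, by maps `a'`, `b'` defined up to a high enough level, with a system `G` that
satisfies (K) shows that `F` satisfies (K) up to a shift of three. If `i n x = 0`, then `x` dies
at some level `M`, so `a' n x` dies in the limit of `G`, hence by (K) already at level `n + 2`;
applying `b'` shows that `x` dies at level `n + 3`. For `x ∈ ker i₂` this gives `i_{2,5} x = 0`,
so `a₂ x` dies at level `6`, which is (a).
Similarly, surjectivity of `j` at level `1`, (K) and `b' ∘ a' = i_{n,n+2}` put every `i n ξ` in
the range of `i₂`, and (a) lets `ξ ↦ j₃ (a₂ η)` descend to homomorphisms `ψ_n`.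
-/

open Function

theorem AddMonoidHom.exists_apply_eq_of_apply_eq {X Y Z A : Type*} [AddCommGroup X]
    [AddCommGroup Y] [AddCommGroup Z] [AddCommGroup A] (α : X →+ Z) (β : Y →+ Z)
    (φ : Y →+ A)
    (hrange : ∀ x, ∃ y, β y = α x) (hker : ∀ y, β y = 0 → φ y = 0) :
    ∃ ψ : X →+ A, ∀ x y, β y = α x → ψ x = φ y := by
  have hfiber : ∀ y y', β y = β y' → φ y = φ y' := fun y y' h => by
    rw [← sub_eq_zero, ← map_sub, hker _ (by rw [map_sub, h, sub_self])]
  choose s hs using hrange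
  refine ⟨AddMonoidHom.mk' (fun x => φ (s x)) fun x x' => ?_,
    fun x y h => hfiber _ _ (by rw [hs, h])⟩
  rw [← map_add]
  exact hfiber _ _ (by rw [map_add, hs, hs, hs, map_add])

section Interleaving

variable {F G : ℕ → Type*} [∀ n, AddCommGroup (F n)] [∀ n, AddCommGroup (G n)]
  (f : ∀ n m, n ≤ m → F n →+ F m) (g : ∀ n m, n ≤ m → G n →+ G m)
  [DirectedSystem F (f · · ·)] [DirectedSystem G (g · · ·)]

theorem map_transition_eq_transition_map (φ : ∀ n, F n →+ G (n + 1)) {N : ℕ}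
    (hφ : ∀ n, n + 1 ≤ N → ∀ x,
      φ (n + 1) (f n (n + 1) n.le_succ x) = g (n + 1) (n + 2) (n + 1).le_succ (φ n x))
    {n l : ℕ} (h : n ≤ l) (hl : l ≤ N) (x : F n) :
    φ l (f n l h x) = g (n + 1) (l + 1) (Nat.succ_le_succ h) (φ n x) := by
  induction l, h using Nat.le_induction with
  | base => rw [DirectedSystem.map_self' f, DirectedSystem.map_self' g]
  | succ l hnl ih =>
    rw [← DirectedSystem.map_map' f hnl l.le_succ, hφ l hl, ih (by omega),
      DirectedSystem.map_map' g]

structure IsInterleaving (N : ℕ) (a : ∀ n, F n →+ G (n + 1)) (b : ∀ n, G n →+ F (n + 1)) :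
    Prop where
  map_a : ∀ n, n + 1 ≤ N → ∀ x,
    a (n + 1) (f n (n + 1) n.le_succ x) = g (n + 1) (n + 2) (n + 1).le_succ (a n x)
  map_b : ∀ n, n + 1 ≤ N → ∀ y,
    b (n + 1) (g n (n + 1) n.le_succ y) = f (n + 1) (n + 2) (n + 1).le_succ (b n y)
  b_a : ∀ n, n + 1 ≤ N → ∀ x, b (n + 1) (a n x) = f n (n + 2) (n.le_add_right 2) x
  a_b : ∀ n, n + 1 ≤ N → ∀ y, a (n + 1) (b n y) = g n (n + 2) (n.le_add_right 2) y

variable {f g} {Finf Ginf : Type*} [AddCommGroup Finf] [AddCommGroup Ginf]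
  {i : ∀ n, F n →+ Finf} {j : ∀ n, G n →+ Ginf}

theorem limit_map_eq_zero_of_transition_eq_zero
    (hj : ∀ n m (h : n ≤ m) y, j m (g n m h y) = j n y)
    {a : ∀ n, F n →+ G (n + 1)} {N : ℕ}
    (ha : ∀ n, n + 1 ≤ N → ∀ x,
      a (n + 1) (f n (n + 1) n.le_succ x) = g (n + 1) (n + 2) (n + 1).le_succ (a n x))
    {n m : ℕ} (h : n ≤ m) (hm : m ≤ N) {x : F n} (hx : f n m h x = 0) :
    j (n + 1) (a n x) = 0 := by
  rw [← hj (n + 1) (m + 1) (by omega), ← map_transition_eq_transition_map f g a ha h hm x, hx,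
    map_zero, map_zero]

theorem IsInterleaving.transition_eq_zero
    (hj : ∀ n m (h : n ≤ m) y, j m (g n m h y) = j n y)
    (hK : ∀ n y, j n y = 0 → g n (n + 1) n.le_succ y = 0)
    {N : ℕ} {a : ∀ n, F n →+ G (n + 1)} {b : ∀ n, G n →+ F (n + 1)}
    (hab : IsInterleaving f g N a b) {n m : ℕ} (h : n ≤ m) (hm : m ≤ N) (hn : n + 2 ≤ N)
    {x : F n} (hx : f n m h x = 0) : f n (n + 3) (n.le_add_right 3) x = 0 := by
  have hax : a (n + 1) (f n (n + 1) n.le_succ x) = 0 := by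
    rw [hab.map_a n (by omega),
      hK _ _ (limit_map_eq_zero_of_transition_eq_zero hj hab.map_a h hm hx)]
  calc f n (n + 3) _ x = f (n + 1) (n + 3) (by omega) (f n (n + 1) n.le_succ x) :=
        (DirectedSystem.map_map' f _ _ x).symm
    _ = b (n + 2) (a (n + 1) (f n (n + 1) n.le_succ x)) := (hab.b_a (n + 1) hn _).symm
    _ = 0 := by rw [hax, map_zero]

theorem IsInterleaving.exists_limit_succ_eq
    (hi : ∀ n m (h : n ≤ m) x, i m (f n m h x) = i n x)
    (hj : ∀ n m (h : n ≤ m) y, j m (g n m h y) = j n y)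
    (hK : ∀ n y, j n y = 0 → g n (n + 1) n.le_succ y = 0)
    {N : ℕ} {a : ∀ n, F n →+ G (n + 1)} {b : ∀ n, G n →+ F (n + 1)}
    (hab : IsInterleaving f g N a b) {q n : ℕ} (hS : Surjective (j q)) (hq : q ≤ n + 1)
    (hn : n + 2 ≤ N) (ξ : F n) : ∃ η : F (q + 1), i (q + 1) η = i n ξ := by
  obtain ⟨y, hy⟩ := hS (j (n + 1) (a n ξ))
  refine ⟨b q y, ?_⟩
  have hdiff : j (n + 1) (g q (n + 1) hq y - a n ξ) = 0 := by rw [map_sub, hj, hy, sub_self]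
  have hG : g q (n + 2) (by omega) y = g (n + 1) (n + 2) (n + 1).le_succ (a n ξ) := by
    rw [← DirectedSystem.map_map' g hq (n + 1).le_succ, ← sub_eq_zero, ← map_sub,
      hK _ _ hdiff]
  have hF : f (q + 1) (n + 3) (by omega) (b q y) = f n (n + 3) (by omega) ξ := by
    rw [← map_transition_eq_transition_map g f b hab.map_b (by omega) hn, hG,
      hab.map_b (n + 1) hn, hab.b_a n (by omega), DirectedSystem.map_map' f]
  rw [← hi _ (n + 3) (by omega), hF, hi]

end Interleaving

/-- Claim 3.4 of the paper: under the direct-system setup with (H), (S), (K), and a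
fixed index `k` whose interleaving homomorphisms `a_n, b_n` exist for all `n ≤ 10`,
(a) if `i 2 x = i 2 x'` then `j k 3 (a 2 x) = j k 3 (a 2 x')`, and (b) the maps
`ψ_n : F n →+ G^k_∞`, `ψ_n ξ = j k 3 (a 2 η)` for any `η` with `i 2 η = i n ξ`,
are well-defined homomorphisms compatible with the transition maps. -/
theorem psi_well_defined
    (F : ℕ → Type) [∀ n, AddCommGroup (F n)]
    (Finf : Type) [AddCommGroup Finf]
    (i2 : ∀ n m : ℕ, n ≤ m → (F n →+ F m))
    (i : ∀ n, F n →+ Finf)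
    (hFid : ∀ (n : ℕ) (x : F n), i2 n n le_rfl x = x)
    (hFcomp : ∀ (n m l : ℕ) (h1 : n ≤ m) (h2 : m ≤ l) (x : F n),
      i2 m l h2 (i2 n m h1 x) = i2 n l (h1.trans h2) x)
    (hicompat : ∀ (n m : ℕ) (h : n ≤ m) (x : F n), i m (i2 n m h x) = i n x)
    (hiker : ∀ (n : ℕ) (x : F n), i n x = 0 → ∃ (m : ℕ) (h : n ≤ m), i2 n m h x = 0)
    (G : ℕ → ℕ → Type) [∀ k n, AddCommGroup (G k n)]
    (Ginf : ℕ → Type) [∀ k, AddCommGroup (Ginf k)]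
    (j2 : ∀ (k n m : ℕ), n ≤ m → (G k n →+ G k m))
    (j : ∀ k n, G k n →+ Ginf k)
    (hGid : ∀ (k n : ℕ) (y : G k n), j2 k n n le_rfl y = y)
    (hGcomp : ∀ (k n m l : ℕ) (h1 : n ≤ m) (h2 : m ≤ l) (y : G k n),
      j2 k m l h2 (j2 k n m h1 y) = j2 k n l (h1.trans h2) y)
    (hjcompat : ∀ (k n m : ℕ) (h : n ≤ m) (y : G k n), j k m (j2 k n m h y) = j k n y)
    (hH : ∀ n₀ : ℕ, ∃ (k : ℕ) (a : ∀ n, F n →+ G k (n+1)) (b : ∀ n, G k n →+ F (n+1)),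
      (∀ n, n + 1 ≤ n₀ → ∀ x : F n,
        a (n+1) (i2 n (n+1) (by omega) x) = j2 k (n+1) (n+2) (by omega) (a n x)) ∧
      (∀ n, n + 1 ≤ n₀ → ∀ y : G k n,
        b (n+1) (j2 k n (n+1) (by omega) y) = i2 (n+1) (n+2) (by omega) (b n y)) ∧
      (∀ n, n + 1 ≤ n₀ → ∀ x : F n, b (n+1) (a n x) = i2 n (n+2) (by omega) x) ∧
      (∀ n, n + 1 ≤ n₀ → ∀ y : G k n, a (n+1) (b n y) = j2 k n (n+2) (by omega) y))
    (hS : ∀ k n, Function.Surjective (j k n))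
    (hK : ∀ (k n : ℕ) (y : G k n), j k n y = 0 → j2 k n (n+1) (by omega) y = 0)
    (k : ℕ) (a : ∀ n, F n →+ G k (n+1)) (b : ∀ n, G k n →+ F (n+1))
    (hacomm : ∀ n, n + 1 ≤ 10 → ∀ x : F n,
      a (n+1) (i2 n (n+1) (by omega) x) = j2 k (n+1) (n+2) (by omega) (a n x))
    : (∀ x x' : F 2, i 2 x = i 2 x' → j k 3 (a 2 x) = j k 3 (a 2 x')) ∧
      ∃ ψ : ∀ n, F n →+ Ginf k,
        (∀ (n : ℕ) (ξ : F n) (η : F 2), i 2 η = i n ξ → ψ n ξ = j k 3 (a 2 η)) ∧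
        (∀ (n m : ℕ) (h : n ≤ m) (ξ : F n), ψ m (i2 n m h ξ) = ψ n ξ) := by
  have : DirectedSystem F (i2 · · ·) := ⟨hFid, fun _ _ _ => hFcomp _ _ _⟩
  have : ∀ k, DirectedSystem (G k) (j2 k · · ·) := fun k =>
    ⟨hGid k, fun _ _ _ => hGcomp k _ _ _⟩
  have hH' : ∀ N, ∃ k' a' b', IsInterleaving i2 (j2 k') N a' b' := fun N => by
    obtain ⟨k', a', b', h₁, h₂, h₃, h₄⟩ := hH N
    exact ⟨k', a', b', h₁, h₂, h₃, h₄⟩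
  have hker : ∀ x : F 2, i 2 x = 0 → j k 3 (a 2 x) = 0 := fun x hx => by
    obtain ⟨M, hM, hMx⟩ := hiker 2 x hx
    obtain ⟨k', a', b', hab⟩ := hH' (M + 4)
    have hx5 := hab.transition_eq_zero (hjcompat k') (hK k') hM (by omega) (by omega) hMx
    exact limit_map_eq_zero_of_transition_eq_zero (hjcompat k) hacomm _ (by norm_num) hx5
  have hrange : ∀ n (ξ : F n), ∃ η : F 2, i 2 η = i n ξ := fun n ξ => by
    obtain ⟨k', a', b', hab⟩ := hH' (n + 2)
    exact hab.exists_limit_succ_eq hicompat (hjcompat k') (hK k') (hS k' 1) (by omega) le_rfl ξ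
  choose ψ hψ using fun n => AddMonoidHom.exists_apply_eq_of_apply_eq (i n) (i 2)
    ((j k 3).comp (a 2)) (hrange n) hker
  refine ⟨fun x x' h => (hψ 2 x x rfl).symm.trans (hψ 2 x x' h.symm), ψ, hψ,
    fun n m h ξ => ?_⟩
  obtain ⟨η, hη⟩ := hrange n ξ
  rw [hψ n ξ η hη, hψ m _ η (by rw [hη, hicompat])]
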